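/- Define μ(z) := N(z)/(1 + D(z)) where N(z) = (1/(2e)) Σ_{n≥1} [cos(x/n!) − (2iy/n!) sin(x/n!)] e^{−y²/n!²}/(2·n!) and D(z) = (1/(2e)) Σ_{n≥1} [cos(x/n!) + (2iy/n!) sin(x/n!)] e^{−y²/n!²}/(2·n!), z = x+iy. Then both series converge uniformly with |N(z)|, |D(z)| ≤ (e−1)/(2e) < 1/2, the denominator never vanishes, and ‖μ‖_∞ ≤ (e−1)/(e+1) < 1/2. -/

import Mathlib

/-!
With `t = y/m!`, the `m`-th term of either series has modulus at most
`(1 + 2|t|) e^{-t²} / (2·m!) ≤ 1/m!`, since `2|t| ≤ 1 + t² ≤ e^{t²}`. The Weierstrass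
M-test with `Σ_{m≥1} 1/m! = e - 1` gives uniform convergence and
`|N|, |D| ≤ a := (e-1)/(2e) < 1/2`; then `|1 + D| ≥ 1 - a > 0` and `|N/(1+D)| ≤ a/(1-a) = (e-1)/(e+1)`.
-/

noncomputable section

open Filter

/-- `m`-th term of the numerator series:
`[cos(x/m!) − (2iy/m!) sin(x/m!)] e^{−y²/m!²}/(2·m!)`. -/
def termN (m : ℕ) (z : ℂ) : ℂ :=
  (((Real.cos (z.re / (Nat.factorial m : ℝ)) : ℝ) : ℂ)
      - 2 * Complex.I * ((z.im / (Nat.factorial m : ℝ) : ℝ) : ℂ)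
        * ((Real.sin (z.re / (Nat.factorial m : ℝ)) : ℝ) : ℂ))
    * ((Real.exp (-(z.im ^ 2) / ((Nat.factorial m : ℝ)) ^ 2)
        / (2 * (Nat.factorial m : ℝ)) : ℝ) : ℂ)

/-- `m`-th term of the denominator series:
`[cos(x/m!) + (2iy/m!) sin(x/m!)] e^{−y²/m!²}/(2·m!)`. -/
def termD (m : ℕ) (z : ℂ) : ℂ :=
  (((Real.cos (z.re / (Nat.factorial m : ℝ)) : ℝ) : ℂ)
      + 2 * Complex.I * ((z.im / (Nat.factorial m : ℝ) : ℝ) : ℂ)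
        * ((Real.sin (z.re / (Nat.factorial m : ℝ)) : ℝ) : ℂ))
    * ((Real.exp (-(z.im ^ 2) / ((Nat.factorial m : ℝ)) ^ 2)
        / (2 * (Nat.factorial m : ℝ)) : ℝ) : ℂ)

/-- `N(z) = (1/(2e)) Σ_{n≥1} termN n z`. -/
def Nfun (z : ℂ) : ℂ := ((2 * Real.exp 1 : ℝ) : ℂ)⁻¹ * ∑' k : ℕ, termN (k + 1) z

/-- `D(z) = (1/(2e)) Σ_{n≥1} termD n z`. -/
def Dfun (z : ℂ) : ℂ := ((2 * Real.exp 1 : ℝ) : ℂ)⁻¹ * ∑' k : ℕ, termD (k + 1) z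

open ComplexConjugate

lemma one_add_two_mul_abs_mul_exp_neg_sq_le_two (t : ℝ) :
    (1 + 2 * |t|) * Real.exp (-(t ^ 2)) ≤ 2 := by
  have h2t : 2 * |t| ≤ t ^ 2 + 1 := by nlinarith [sq_abs t, sq_nonneg (|t| - 1)]
  have hexp : (1 + t ^ 2) * Real.exp (-(t ^ 2)) ≤ 1 := by
    calc (1 + t ^ 2) * Real.exp (-(t ^ 2)) ≤ Real.exp (t ^ 2) * Real.exp (-(t ^ 2)) := by
          gcongr; linarith [Real.add_one_le_exp (t ^ 2)]
      _ = 1 := by rw [← Real.exp_add, add_neg_cancel, Real.exp_zero]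
  nlinarith [Real.exp_le_one_iff.mpr (neg_nonpos.mpr (sq_nonneg t)), Real.exp_pos (-(t ^ 2))]

lemma norm_cos_add_two_I_mul_sin_le (x t : ℝ) :
    ‖(Real.cos x : ℂ) + 2 * Complex.I * t * Real.sin x‖ ≤ 1 + 2 * |t| := by
  have hsin : ‖(2 * Complex.I * t * Real.sin x : ℂ)‖ = 2 * |t| * |Real.sin x| := by
    rw [norm_mul, norm_mul, norm_mul, Complex.norm_I, Complex.norm_real, Complex.norm_real,
      Real.norm_eq_abs, Real.norm_eq_abs, Complex.norm_two, mul_one]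
  calc ‖(Real.cos x : ℂ) + 2 * Complex.I * t * Real.sin x‖
      ≤ ‖(Real.cos x : ℂ)‖ + ‖(2 * Complex.I * t * Real.sin x : ℂ)‖ := norm_add_le _ _
    _ = |Real.cos x| + 2 * |t| * |Real.sin x| := by rw [hsin, Complex.norm_real, Real.norm_eq_abs]
    _ ≤ 1 + 2 * |t| * 1 := by
        gcongr
        exacts [Real.abs_cos_le_one x, Real.abs_sin_le_one x]
    _ = 1 + 2 * |t| := by ring

lemma norm_termD_le (m : ℕ) (z : ℂ) : ‖termD m z‖ ≤ (m.factorial : ℝ)⁻¹ := by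
  set F : ℝ := (m.factorial : ℝ)
  have hF : 0 < F := by positivity
  have hexp : -(z.im ^ 2) / F ^ 2 = -((z.im / F) ^ 2) := by ring
  rw [termD, norm_mul, Complex.norm_real, Real.norm_of_nonneg (by positivity), hexp]
  calc _ ≤ (1 + 2 * |z.im / F|) * (Real.exp (-((z.im / F) ^ 2)) / (2 * F)) := by
        gcongr; exact norm_cos_add_two_I_mul_sin_le _ _
    _ = (1 + 2 * |z.im / F|) * Real.exp (-((z.im / F) ^ 2)) / (2 * F) := by ring
    _ ≤ 2 / (2 * F) := by gcongr; exact one_add_two_mul_abs_mul_exp_neg_sq_le_two _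
    _ = F⁻¹ := by field_simp

lemma termN_eq_termD_conj (m : ℕ) (z : ℂ) : termN m z = termD m (conj z) := by
  simp only [termN, termD, Complex.conj_re, Complex.conj_im, neg_div, neg_sq, Complex.ofReal_neg]
  ring

lemma norm_termN_le (m : ℕ) (z : ℂ) : ‖termN m z‖ ≤ (m.factorial : ℝ)⁻¹ :=
  termN_eq_termD_conj m z ▸ norm_termD_le m (conj z)

lemma hasSum_inv_factorial_succ :
    HasSum (fun k : ℕ => ((k + 1).factorial : ℝ)⁻¹) (Real.exp 1 - 1) := by
  have h : HasSum (fun n : ℕ => (n.factorial : ℝ)⁻¹) (Real.exp 1) := by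
    simpa [Real.exp_eq_exp_ℝ] using NormedSpace.expSeries_div_hasSum_exp (1 : ℝ)
  simpa using (hasSum_nat_add_iff' 1).2 h

lemma tendstoUniformlyOn_const_mul_tsum_nat {α 𝕜 : Type*} [NormedField 𝕜]
    [CompleteSpace 𝕜] {f : ℕ → α → 𝕜} {u : ℕ → ℝ} (hu : Summable u)
    (hfu : ∀ n x, ‖f n x‖ ≤ u n) (c : 𝕜) (s : Set α) :
    TendstoUniformlyOn (fun N x => c * ∑ n ∈ Finset.range N, f n x)
      (fun x => c * ∑' n, f n x) atTop s := by
  have hcfu : ∀ n x, ‖c * f n x‖ ≤ ‖c‖ * u n := fun n x => by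
    rw [norm_mul]; exact mul_le_mul_of_nonneg_left (hfu n x) (norm_nonneg c)
  simpa only [Finset.mul_sum, tsum_mul_left] using
    (tendstoUniformly_tsum_nat (hu.mul_left ‖c‖) hcfu).tendstoUniformlyOn

lemma norm_inv_two_exp_one_mul_tsum_le {f : ℕ → ℂ}
    (hf : ∀ k, ‖f k‖ ≤ ((k + 1).factorial : ℝ)⁻¹) :
    ‖((2 * Real.exp 1 : ℝ) : ℂ)⁻¹ * ∑' k, f k‖ ≤ (Real.exp 1 - 1) / (2 * Real.exp 1) := by
  rw [norm_mul, norm_inv, Complex.norm_real, Real.norm_of_nonneg (by positivity),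
    inv_mul_eq_div]
  gcongr
  exact tsum_of_norm_bounded hasSum_inv_factorial_succ hf

lemma one_add_ne_zero_of_norm_lt_one {𝕜 : Type*} [NormedField 𝕜] {d : 𝕜} (hd : ‖d‖ < 1) :
    1 + d ≠ 0 := by
  intro h
  rw [← add_eq_zero_iff_neg_eq.mp h, norm_neg, norm_one] at hd
  exact lt_irrefl 1 hd

lemma norm_div_one_add_le {𝕜 : Type*} [NormedField 𝕜] {n d : 𝕜} {a : ℝ}
    (hn : ‖n‖ ≤ a) (hd : ‖d‖ ≤ a) (ha : a < 1) : ‖n / (1 + d)‖ ≤ a / (1 - a) := by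
  have hden : 1 - a ≤ ‖1 + d‖ := by
    have := norm_sub_norm_le (1 : 𝕜) (-d)
    rw [norm_one, norm_neg, sub_neg_eq_add] at this
    linarith
  rw [norm_div]
  exact div_le_div₀ ((norm_nonneg n).trans hn) hn (by linarith) hden

/-- Both series converge uniformly on `ℂ`, `|N(z)|, |D(z)| ≤ (e−1)/(2e) < 1/2`,
the denominator `1 + D(z)` never vanishes, and
`‖μ‖_∞ ≤ (e−1)/(e+1) < 1/2` for `μ = N/(1+D)`. -/
theorem stmt8 :
    TendstoUniformlyOn
      (fun m z => ((2 * Real.exp 1 : ℝ) : ℂ)⁻¹ * ∑ k ∈ Finset.range m, termN (k + 1) z)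
      Nfun atTop Set.univ ∧
    TendstoUniformlyOn
      (fun m z => ((2 * Real.exp 1 : ℝ) : ℂ)⁻¹ * ∑ k ∈ Finset.range m, termD (k + 1) z)
      Dfun atTop Set.univ ∧
    (∀ z, ‖Nfun z‖ ≤ (Real.exp 1 - 1) / (2 * Real.exp 1)) ∧
    (∀ z, ‖Dfun z‖ ≤ (Real.exp 1 - 1) / (2 * Real.exp 1)) ∧
    (Real.exp 1 - 1) / (2 * Real.exp 1) < 1 / 2 ∧
    (∀ z, 1 + Dfun z ≠ 0) ∧
    (∀ z, ‖Nfun z / (1 + Dfun z)‖ ≤ (Real.exp 1 - 1) / (Real.exp 1 + 1)) ∧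
    (Real.exp 1 - 1) / (Real.exp 1 + 1) < 1 / 2 := by
  have he : 0 < Real.exp 1 := Real.exp_pos 1
  have he3 : Real.exp 1 < 3 := by linarith [Real.exp_one_lt_d9]
  have hsum := hasSum_inv_factorial_succ.summable
  have hN : ∀ z, ‖Nfun z‖ ≤ (Real.exp 1 - 1) / (2 * Real.exp 1) := fun z =>
    norm_inv_two_exp_one_mul_tsum_le fun k => norm_termN_le (k + 1) z
  have hD : ∀ z, ‖Dfun z‖ ≤ (Real.exp 1 - 1) / (2 * Real.exp 1) := fun z =>
    norm_inv_two_exp_one_mul_tsum_le fun k => norm_termD_le (k + 1) z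
  have ha : (Real.exp 1 - 1) / (2 * Real.exp 1) < 1 / 2 := by
    rw [div_lt_div_iff₀ (by positivity) two_pos]; linarith
  have ha' : (Real.exp 1 - 1) / (2 * Real.exp 1) / (1 - (Real.exp 1 - 1) / (2 * Real.exp 1))
      = (Real.exp 1 - 1) / (Real.exp 1 + 1) := by
    have h1 : 1 - (Real.exp 1 - 1) / (2 * Real.exp 1) = (Real.exp 1 + 1) / (2 * Real.exp 1) := by
      field_simp; ring
    rw [h1, div_div_div_cancel_right₀ (by positivity)]
  refine ⟨tendstoUniformlyOn_const_mul_tsum_nat hsum (fun k => norm_termN_le (k + 1)) _ _,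
    tendstoUniformlyOn_const_mul_tsum_nat hsum (fun k => norm_termD_le (k + 1)) _ _,
    hN, hD, ha, fun z => one_add_ne_zero_of_norm_lt_one ((hD z).trans_lt (by linarith)),
    fun z => ha' ▸ norm_div_one_add_le (hN z) (hD z) (by linarith), ?_⟩
  rw [div_lt_div_iff₀ (by positivity) two_pos]; linarith
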